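/- For any n×n×n array y = (y_{ijk}), there is an absolute constant c > 0 (independent of n and y) such that c^{-1}·(1/n²)·Σ_{k=1}^{n²} y*_k ≤ (1/(n!)²)·Σ_{π,σ ∈ S_n} max_{1≤i≤n} |y_{i,π(i),σ(i)}| ≤ c·(1/n²)·Σ_{k=1}^{n²} y*_k, where y*_1 ≥ y*_2 ≥ ... is the decreasing rearrangement of the absolute values of all n³ entries of y. -/

import Mathlib

/-!
Encode a pair `(π, σ)` of permutations by the transversal `{(i, π i, σ i)}` of the cube; each cell
lies on a `1/n²` fraction of the transversals. Let `S` be the sum of the `n²` largest entries.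

Upper bound: on a transversal, an entry outside the `n²` largest is at most their average `S/n²`,
so the maximum is at most `S/n²` plus the sum of the transversal's entries among the `n²` largest,
and the latter averages to `S/n²` over all transversals.

Lower bound: by the second Bonferroni inequality, a set of `b ≤ (n-1)²` cells meets at least
`b ((n-1)!)² / 2` transversals, because two distinct cells share at most `((n-2)!)²`
transversals; as `n² ≤ 4 (n-1)²`, a set of `b ≤ n²` cells then meets at least `b ((n-1)!)² / 8`.
A layer-cake argument over the `n²` largest entries turns these counts into
`((n-1)!)² S / 8 ≤ ∑ max`.
-/

open scoped Classical

/-- Sum of the `m` largest entries of a vector. -/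
noncomputable def sumLargest {ι : Type*} [Fintype ι] (v : ι → ℝ) (m : ℕ) : ℝ :=
  sSup ((fun I : Finset ι => ∑ i ∈ I, v i) '' {I | I.card = m})

open Finset Equiv
open scoped Nat

theorem exists_sum_eq_sumLargest {ι : Type*} [Fintype ι] [DecidableEq ι] (v : ι → ℝ) {m : ℕ}
    (hm : m ≤ Fintype.card ι) :
    ∃ A : Finset ι, #A = m ∧ ∑ i ∈ A, v i = sumLargest v m ∧ ∀ q ∉ A, ∀ p ∈ A, v q ≤ v p := by
  obtain ⟨A, hA, hAmax⟩ := (univ.powersetCard m).exists_max_image (fun I => ∑ i ∈ I, v i)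
    (powersetCard_nonempty.2 (by simpa using hm))
  have hAm : #A = m := (mem_powersetCard.1 hA).2
  refine ⟨A, hAm, ?_, fun q hq p hp => ?_⟩
  · have hgreatest : IsGreatest ((fun I : Finset ι => ∑ i ∈ I, v i) '' {I | #I = m})
        (∑ i ∈ A, v i) := by
      refine ⟨⟨A, hAm, rfl⟩, ?_⟩
      rintro _ ⟨I, hI, rfl⟩
      exact hAmax I (mem_powersetCard.2 ⟨subset_univ _, hI⟩)
    exact hgreatest.csSup_eq.symm
  · have hq' : q ∉ A.erase p := fun h => hq (mem_of_mem_erase h)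
    have hexch := hAmax (insert q (A.erase p)) <| mem_powersetCard.2
      ⟨subset_univ _, by rw [card_insert_of_notMem hq', card_erase_of_mem hp, hAm,
        Nat.sub_add_cancel (hAm ▸ card_pos.2 ⟨p, hp⟩)]⟩
    rw [sum_insert hq', ← add_sum_erase A v hp] at hexch
    linarith

theorem sumLargest_nonneg {ι : Type*} [Fintype ι] {v : ι → ℝ} (hv : ∀ i, 0 ≤ v i) {m : ℕ}
    (hm : m ≤ Fintype.card ι) : 0 ≤ sumLargest v m := by
  obtain ⟨A, -, hA, -⟩ := exists_sum_eq_sumLargest v hm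
  exact hA ▸ sum_nonneg fun i _ => hv i

section PermCounting

variable {α : Type*} [Fintype α] [DecidableEq α]

theorem card_perm_apply_eq (i j : α) :
    #{π : Perm α | π i = j} = (Fintype.card α - 1)! := by
  have hfiber (j' : α) : #{π : Perm α | π i = j'} = #{π : Perm α | π i = j} :=
    card_nbij' (swap j' j * ·) (swap j' j * ·) (fun π => by simp_all) (fun π => by simp_all)
      (fun π _ => swap_mul_self_mul _ _ _) (fun π _ => swap_mul_self_mul _ _ _)
  have hsum : ∑ j', #{π : Perm α | π i = j'} = (Fintype.card α)! := by
    rw [← card_eq_sum_card_fiberwise (fun π _ => mem_univ (π i)), card_univ, Fintype.card_perm]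
  have hpos : 0 < Fintype.card α := Fintype.card_pos_iff.2 ⟨i⟩
  rw [sum_congr rfl fun j' _ => hfiber j', sum_const, card_univ, smul_eq_mul,
    ← Nat.mul_factorial_pred hpos.ne'] at hsum
  exact Nat.eq_of_mul_eq_mul_left hpos hsum

theorem sum_perm_apply {M : Type*} [AddCommMonoid M] (i : α) (h : α → M) :
    ∑ π : Perm α, h (π i) = (Fintype.card α - 1)! • ∑ j, h j := by
  rw [← sum_fiberwise univ (fun π : Perm α => π i), smul_sum]
  refine sum_congr rfl fun j _ => ?_
  rw [sum_congr rfl fun π hπ => by rw [(mem_filter.1 hπ).2], sum_const, card_perm_apply_eq]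

theorem sum_sum_sum_perm_transversal {M : Type*} [AddCommMonoid M] (g : α × α × α → M) :
    ∑ π : Perm α, ∑ σ : Perm α, ∑ i, g (i, π i, σ i) = (Fintype.card α - 1)! ^ 2 • ∑ p, g p := by
  calc ∑ π : Perm α, ∑ σ : Perm α, ∑ i, g (i, π i, σ i)
      = ∑ i, ∑ π : Perm α, ∑ σ : Perm α, g (i, π i, σ i) := by
        simp_rw [sum_comm (γ := Perm α) (α := α)]
    _ = ∑ i, (Fintype.card α - 1)! • ∑ j, (Fintype.card α - 1)! • ∑ k, g (i, j, k) := by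
        refine sum_congr rfl fun i _ => ?_
        rw [← sum_perm_apply i (fun j => (Fintype.card α - 1)! • ∑ k, g (i, j, k))]
        exact sum_congr rfl fun π _ => sum_perm_apply i (fun k => g (i, π i, k))
    _ = (Fintype.card α - 1)! ^ 2 • ∑ p, g p := by
        simp_rw [Fintype.sum_prod_type, smul_sum, sq, mul_smul]

theorem card_perm_apply_eq_and_apply_eq_mul_le {i i' : α} (hi : i ≠ i') (j j' : α) :
    #{π : Perm α | π i = j ∧ π i' = j'} * (Fintype.card α - 1) ≤ (Fintype.card α - 1)! := by
  calc #{π : Perm α | π i = j ∧ π i' = j'} * (Fintype.card α - 1)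
      = #(({π | π i = j ∧ π i' = j'} : Finset (Perm α)) ×ˢ univ.erase i) := by
        rw [card_product, card_erase_of_mem (mem_univ _), card_univ]
    _ ≤ #{π : Perm α | π i = j} := by
        refine card_le_card_of_injOn (fun x => x.1 * swap i' x.2) ?_ ?_
        · rintro ⟨π, a⟩ h
          simp only [coe_product, Set.mem_prod, mem_coe, mem_filter, mem_univ, true_and,
            mem_erase, ne_eq] at h
          simpa [swap_apply_of_ne_of_ne hi (Ne.symm h.2.1)] using h.1.1
        · rintro ⟨π, a⟩ h ⟨ρ, b⟩ h' (hτ : π * swap i' a = ρ * swap i' b)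
          simp only [coe_product, Set.mem_prod, mem_coe, mem_filter, mem_univ, true_and] at h h'
          -- `a` is recovered as the point that `π * swap i' a` sends to `j'`
          have hab : a = b := (π * swap i' a).injective <| by
            rw [Perm.mul_apply, swap_apply_right, h.1.2, hτ, Perm.mul_apply, swap_apply_right,
              h'.1.2]
          subst hab
          rw [mul_right_cancel hτ]
    _ = (Fintype.card α - 1)! := card_perm_apply_eq i j

end PermCounting

theorem sum_card_eq_sum_card_filter_mem {κ Ω : Type*} [Fintype Ω] [DecidableEq Ω] (s : Finset κ)
    (F : κ → Finset Ω) : ∑ x ∈ s, #(F x) = ∑ ω, #{x ∈ s | ω ∈ F x} := by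
  simp_rw [card_eq_sum_ones, sum_filter]
  rw [sum_comm]
  refine sum_congr rfl fun x _ => ?_
  rw [← sum_filter, filter_mem_eq_inter, univ_inter]

theorem two_mul_sum_card_le_card_biUnion_add {ι Ω : Type*} [DecidableEq ι] [Fintype Ω]
    [DecidableEq Ω] (B : Finset ι) (E : ι → Finset Ω) :
    2 * ∑ p ∈ B, #(E p) ≤ 2 * #(B.biUnion E) + ∑ x ∈ B.offDiag, #(E x.1 ∩ E x.2) := by
  have hunion : #(B.biUnion E) = ∑ ω, if ω ∈ B.biUnion E then 1 else 0 := by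
    rw [sum_boole, filter_mem_eq_inter, univ_inter]; rfl
  have hpairs (ω : Ω) : #{x ∈ B.offDiag | ω ∈ E x.1 ∩ E x.2} =
      #{p ∈ B | ω ∈ E p} * #{p ∈ B | ω ∈ E p} - #{p ∈ B | ω ∈ E p} := by
    rw [← offDiag_card]
    congr 1
    ext x
    simp only [mem_filter, mem_offDiag, mem_inter]
    tauto
  rw [sum_card_eq_sum_card_filter_mem B, sum_card_eq_sum_card_filter_mem B.offDiag, hunion,
    mul_sum, mul_sum, ← sum_add_distrib]
  -- pointwise, with `N` the number of sets `E p` containing `ω`: `2 N ≤ 2 [N > 0] + N (N - 1)`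
  refine sum_le_sum fun ω _ => ?_
  rw [hpairs]
  by_cases hω : ω ∈ B.biUnion E
  · have hN : 0 < #{p ∈ B | ω ∈ E p} := by
      obtain ⟨p, hp, hωp⟩ := mem_biUnion.1 hω
      exact card_pos.2 ⟨p, mem_filter.2 ⟨hp, hωp⟩⟩
    rw [if_pos hω]
    generalize #{p ∈ B | ω ∈ E p} = N at hN ⊢
    obtain _ | _ | N := N
    · omega
    · simp
    · zify [Nat.le_mul_self (N + 2)]
      nlinarith
  · have hN : #{p ∈ B | ω ∈ E p} = 0 := by
      rw [card_eq_zero, filter_eq_empty_iff]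
      exact fun p hp hωp => hω (mem_biUnion.2 ⟨p, hp, hωp⟩)
    simp [hN]

section Transversals

variable {α : Type*} [Fintype α] [DecidableEq α]

/-- The pairs `(π, σ)` whose transversal `{(i, π i, σ i)}` passes through the cell `p`. -/
def transversalsThrough (p : α × α × α) : Finset (Perm α × Perm α) :=
  ({π | π p.1 = p.2.1} : Finset (Perm α)) ×ˢ ({σ | σ p.1 = p.2.2} : Finset (Perm α))

theorem card_transversalsThrough (p : α × α × α) :
    #(transversalsThrough p) = (Fintype.card α - 1)! ^ 2 := by
  rw [transversalsThrough, card_product, card_perm_apply_eq, card_perm_apply_eq, sq]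

theorem card_transversalsThrough_inter_mul_le {p q : α × α × α} (hpq : p ≠ q) :
    #(transversalsThrough p ∩ transversalsThrough q) * (Fintype.card α - 1) ^ 2 ≤
      (Fintype.card α - 1)! ^ 2 := by
  by_cases h1 : p.1 = q.1
  · suffices transversalsThrough p ∩ transversalsThrough q = ∅ by simp [this]
    refine eq_empty_of_forall_notMem fun ω hω => hpq ?_
    simp only [transversalsThrough, mem_inter, mem_product, mem_filter, mem_univ, true_and] at hω
    obtain ⟨⟨hp1, hp2⟩, hq1, hq2⟩ := hω
    rw [h1] at hp1 hp2
    exact Prod.ext h1 (Prod.ext (hp1.symm.trans hq1) (hp2.symm.trans hq2))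
  · rw [transversalsThrough, transversalsThrough, product_inter_product, card_product,
      ← filter_and, ← filter_and]
    linarith [Nat.mul_le_mul (card_perm_apply_eq_and_apply_eq_mul_le h1 p.2.1 q.2.1)
      (card_perm_apply_eq_and_apply_eq_mul_le h1 p.2.2 q.2.2)]

theorem factorial_sq_mul_card_le_two_mul_card_biUnion {B : Finset (α × α × α)}
    (hB : #B ≤ (Fintype.card α - 1) ^ 2) :
    (Fintype.card α - 1)! ^ 2 * #B ≤ 2 * #(B.biUnion transversalsThrough) := by
  set K := (Fintype.card α - 1)!
  set d := Fintype.card α - 1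
  have hpairs : (∑ x ∈ B.offDiag, #(transversalsThrough x.1 ∩ transversalsThrough x.2)) * d ^ 2
      ≤ #B * #B * K ^ 2 :=
    calc _ = ∑ x ∈ B.offDiag, #(transversalsThrough x.1 ∩ transversalsThrough x.2) * d ^ 2 :=
          sum_mul ..
      _ ≤ ∑ x ∈ B.offDiag, K ^ 2 := sum_le_sum fun x hx =>
          card_transversalsThrough_inter_mul_le (mem_offDiag.1 hx).2.2
      _ ≤ #B * #B * K ^ 2 := by
          rw [sum_const, smul_eq_mul, offDiag_card]
          exact Nat.mul_le_mul_right _ (Nat.sub_le _ _)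
  have hbonf := two_mul_sum_card_le_card_biUnion_add B transversalsThrough
  simp only [card_transversalsThrough, sum_const, smul_eq_mul] at hbonf
  rcases Nat.eq_zero_or_pos d with hd | hd
  · simp_all
  refine Nat.le_of_mul_le_mul_right ?_ (pow_pos hd 2)
  have h1 := Nat.mul_le_mul_right (d ^ 2) hbonf
  have h2 := Nat.mul_le_mul_left (#B * K ^ 2) hB
  nlinarith

theorem factorial_sq_mul_card_le_eight_mul_card_biUnion {B : Finset (α × α × α)}
    (hB : #B ≤ Fintype.card α ^ 2) :
    (Fintype.card α - 1)! ^ 2 * #B ≤ 8 * #(B.biUnion transversalsThrough) := by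
  set K := (Fintype.card α - 1)!
  set d := Fintype.card α - 1
  by_cases hsmall : #B ≤ d ^ 2
  · linarith [factorial_sq_mul_card_le_two_mul_card_biUnion hsmall]
  obtain ⟨p, hp⟩ : B.Nonempty := card_pos.1 (by omega)
  rcases Nat.eq_zero_or_pos d with hd | hd
  · have hB1 : #B ≤ 1 := hB.trans (pow_le_one₀ (Nat.zero_le _) (by omega))
    calc K ^ 2 * #B ≤ #(transversalsThrough p) := by
          rw [card_transversalsThrough]; exact mul_le_of_le_one_right' hB1
      _ ≤ #(B.biUnion transversalsThrough) := card_le_card (subset_biUnion_of_mem _ hp)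
      _ ≤ _ := by omega
  · obtain ⟨C, hCB, hC⟩ := exists_subset_card_eq (not_le.1 hsmall).le
    have hUC := factorial_sq_mul_card_le_two_mul_card_biUnion hC.le
    rw [hC] at hUC
    have hCU := card_le_card (biUnion_subset_biUnion_of_subset_left transversalsThrough hCB)
    have hnd : Fintype.card α ^ 2 ≤ 4 * d ^ 2 := by
      rw [show 4 * d ^ 2 = (2 * d) ^ 2 by ring]; exact Nat.pow_le_pow_left (by omega) 2
    nlinarith

end Transversals

theorem iSup_le_add_sum {ι : Type*} [Fintype ι] {g : ι → ℝ} (hg : ∀ i, 0 ≤ g i) (s : Finset ι)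
    {t : ℝ} (ht : 0 ≤ t) (hgt : ∀ i ∉ s, g i ≤ t) : ⨆ i, g i ≤ t + ∑ i ∈ s, g i := by
  have hs : 0 ≤ ∑ i ∈ s, g i := sum_nonneg fun i _ => hg i
  refine Real.iSup_le (fun i => ?_) (by positivity)
  by_cases hi : i ∈ s
  · linarith [single_le_sum (fun j _ => hg j) hi]
  · linarith [hgt i hi]

theorem mul_sum_le_sum_of_mul_card_le_card_biUnion {ι Ω : Type*} [DecidableEq ι] [Fintype Ω]
    [DecidableEq Ω]
    (E : ι → Finset Ω) (β : ℝ) (B : Finset ι) {f : ι → ℝ} {h : Ω → ℝ}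
    (hf : ∀ p ∈ B, 0 ≤ f p) (hh : ∀ ω, 0 ≤ h ω) (hfh : ∀ p ∈ B, ∀ ω ∈ E p, f p ≤ h ω)
    (hcard : ∀ C ⊆ B, β * #C ≤ #(C.biUnion E)) :
    β * ∑ p ∈ B, f p ≤ ∑ ω, h ω := by
  induction B using Finset.strongInduction generalizing f h with
  | H B ih =>
  rcases B.eq_empty_or_nonempty with rfl | hB
  · simpa using sum_nonneg fun ω _ => hh ω
  -- peel off the level `t = min_B f`, which is paid for on all of `⋃_{p ∈ B} E p`
  obtain ⟨p₀, hp₀, hmin⟩ := B.exists_min_image f hB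
  set t := f p₀
  set U := B.biUnion E
  have hU (ω) (hω : ω ∈ U) : t ≤ h ω := by
    obtain ⟨p, hp, hωp⟩ := mem_biUnion.1 hω
    exact (hmin p hp).trans (hfh p hp ω hωp)
  have hrest := ih (B.erase p₀) (erase_ssubset hp₀)
    (f := fun p => f p - t) (h := fun ω => h ω - if ω ∈ U then t else 0)
    (fun p hp => sub_nonneg.2 (hmin p (mem_of_mem_erase hp)))
    (fun ω => by
      split_ifs with hω
      · linarith [hU ω hω]
      · linarith [hh ω])
    (fun p hp ω hωp => by
      have hp' := mem_of_mem_erase hp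
      rw [if_pos (mem_biUnion.2 ⟨p, hp', hωp⟩)]
      linarith [hfh p hp' ω hωp])
    (fun C hC => hcard C (hC.trans (erase_subset _ _)))
  rw [sum_sub_distrib, sum_sub_distrib, sum_const, sum_ite_mem, univ_inter, sum_const,
    card_erase_of_mem hp₀, nsmul_eq_mul, nsmul_eq_mul] at hrest
  have hB1 : ((#B - 1 : ℕ) : ℝ) = #B - 1 := by
    rw [Nat.cast_sub (card_pos.2 hB), Nat.cast_one]
  rw [hB1] at hrest
  have hpay : β * #B * t ≤ #U * t :=
    mul_le_mul_of_nonneg_right (hcard B subset_rfl) (hf p₀ hp₀)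
  rw [← add_sum_erase B f hp₀]
  nlinarith

theorem sq_card_le_card_cube {α : Type*} [Fintype α] :
    Fintype.card α ^ 2 ≤ Fintype.card (α × α × α) := by
  rw [Fintype.card_prod, Fintype.card_prod, ← sq]
  rcases (Fintype.card α).eq_zero_or_pos with h | h
  · simp [h]
  · exact Nat.le_mul_of_pos_left _ h

section Bounds

variable {α : Type*} [Fintype α] [DecidableEq α]

theorem card_sq_mul_sum_iSup_le [Nonempty α] (y : α → α → α → ℝ) :
    (Fintype.card α : ℝ) ^ 2 * ∑ π : Perm α, ∑ σ : Perm α, ⨆ i, |y i (π i) (σ i)| ≤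
      2 * ((Fintype.card α)! : ℝ) ^ 2 *
        sumLargest (fun p : α × α × α => |y p.1 p.2.1 p.2.2|) (Fintype.card α ^ 2) := by
  set f := fun p : α × α × α => |y p.1 p.2.1 p.2.2|
  obtain ⟨A, hAcard, hAsum, hAmax⟩ := exists_sum_eq_sumLargest f sq_card_le_card_cube
  have hS := sumLargest_nonneg (fun p => abs_nonneg (y p.1 p.2.1 p.2.2)) sq_card_le_card_cube
  set n := Fintype.card α
  set S := sumLargest f (n ^ 2)
  have hn0 : (n : ℝ) ≠ 0 := Nat.cast_ne_zero.2 Fintype.card_ne_zero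
  have hn : (0 : ℝ) < n ^ 2 := by positivity
  have hsmall (q) (hq : q ∉ A) : f q ≤ S / n ^ 2 := by
    rw [le_div_iff₀ hn, ← hAsum, mul_comm]
    have := card_nsmul_le_sum A f (f q) (hAmax q hq)
    rwa [hAcard, nsmul_eq_mul, Nat.cast_pow] at this
  have hpoint (π σ : Perm α) : ⨆ i, |y i (π i) (σ i)| ≤
      S / n ^ 2 + ∑ i, if (i, π i, σ i) ∈ A then f (i, π i, σ i) else 0 := by
    rw [← sum_filter]
    exact iSup_le_add_sum (fun i => abs_nonneg _) _ (div_nonneg hS hn.le)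
      (fun i hi => hsmall _ (by simpa using hi))
  have hsum := sum_le_sum fun π (_ : π ∈ univ) => sum_le_sum fun σ (_ : σ ∈ univ) => hpoint π σ
  simp only [sum_add_distrib, sum_const, card_univ, Fintype.card_perm, nsmul_eq_mul] at hsum
  rw [sum_sum_sum_perm_transversal (fun p => if p ∈ A then f p else 0), sum_ite_mem, univ_inter,
    hAsum, nsmul_eq_mul] at hsum
  have hfact : (n ! : ℝ) = n * (n - 1)! := by
    exact_mod_cast (Nat.mul_factorial_pred Fintype.card_ne_zero).symm
  calc (n : ℝ) ^ 2 * ∑ π : Perm α, ∑ σ : Perm α, ⨆ i, |y i (π i) (σ i)|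
      ≤ n ^ 2 * (n ! * (n ! * (S / n ^ 2)) + ((n - 1)! ^ 2 : ℕ) * S) := by gcongr
    _ = 2 * (n ! : ℝ) ^ 2 * S := by
      rw [hfact]; field_simp; push_cast; ring

theorem factorial_sq_mul_sumLargest_le [Nonempty α] (y : α → α → α → ℝ) :
    ((Fintype.card α)! : ℝ) ^ 2 *
        sumLargest (fun p : α × α × α => |y p.1 p.2.1 p.2.2|) (Fintype.card α ^ 2) ≤
      8 * (Fintype.card α : ℝ) ^ 2 * ∑ π : Perm α, ∑ σ : Perm α, ⨆ i, |y i (π i) (σ i)| := by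
  set f := fun p : α × α × α => |y p.1 p.2.1 p.2.2|
  obtain ⟨A, hAcard, hAsum, -⟩ := exists_sum_eq_sumLargest f sq_card_le_card_cube
  set n := Fintype.card α
  have hcake := mul_sum_le_sum_of_mul_card_le_card_biUnion transversalsThrough
    (((n - 1)! : ℝ) ^ 2 / 8) A
    (f := f) (h := fun ω => ⨆ i, |y i (ω.1 i) (ω.2 i)|)
    (fun p _ => abs_nonneg _) (fun ω => Real.iSup_nonneg fun i => abs_nonneg _)
    (fun p _ ω hω => by
      simp only [transversalsThrough, mem_product, mem_filter, mem_univ, true_and] at hω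
      calc f p = |y p.1 (ω.1 p.1) (ω.2 p.1)| := by rw [hω.1, hω.2]
        _ ≤ ⨆ i, |y i (ω.1 i) (ω.2 i)| :=
          le_ciSup (f := fun i => |y i (ω.1 i) (ω.2 i)|) (Set.finite_range _).bddAbove p.1)
    (fun C hC => by
      have := factorial_sq_mul_card_le_eight_mul_card_biUnion ((card_le_card hC).trans hAcard.le)
      have := (Nat.cast_le (α := ℝ)).2 this
      push_cast at this
      linarith)
  simp only [hAsum, Fintype.sum_prod_type] at hcake
  have hfact : (n ! : ℝ) = n * (n - 1)! := by
    exact_mod_cast (Nat.mul_factorial_pred Fintype.card_ne_zero).symm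
  rw [hfact]
  nlinarith [sq_nonneg (n : ℝ)]

end Bounds

theorem kwapien_schutt : ∃ c : ℝ, 0 < c ∧
    ∀ (n : ℕ), 0 < n → ∀ y : Fin n → Fin n → Fin n → ℝ,
      (c⁻¹ * ((1 / (n : ℝ) ^ 2) *
            sumLargest (fun p : Fin n × Fin n × Fin n => |y p.1 p.2.1 p.2.2|) (n ^ 2))
          ≤ (1 / (Nat.factorial n : ℝ) ^ 2) *
              ∑ π : Equiv.Perm (Fin n), ∑ σ : Equiv.Perm (Fin n),
                ⨆ i : Fin n, |y i (π i) (σ i)|) ∧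
      ((1 / (Nat.factorial n : ℝ) ^ 2) *
            ∑ π : Equiv.Perm (Fin n), ∑ σ : Equiv.Perm (Fin n),
              ⨆ i : Fin n, |y i (π i) (σ i)|
          ≤ c * ((1 / (n : ℝ) ^ 2) *
              sumLargest (fun p : Fin n × Fin n × Fin n => |y p.1 p.2.1 p.2.2|) (n ^ 2))) := by
  refine ⟨8, by norm_num, fun n hn y => ?_⟩
  have : Nonempty (Fin n) := ⟨⟨0, hn⟩⟩
  have hupper := card_sq_mul_sum_iSup_le y
  have hlower := factorial_sq_mul_sumLargest_le y
  have hS := sumLargest_nonneg (fun p => abs_nonneg (y p.1 p.2.1 p.2.2))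
    (sq_card_le_card_cube (α := Fin n))
  simp only [Fintype.card_fin] at hupper hlower hS
  set S := sumLargest (fun p : Fin n × Fin n × Fin n => |y p.1 p.2.1 p.2.2|) (n ^ 2)
  set T := ∑ π : Perm (Fin n), ∑ σ : Perm (Fin n), ⨆ i, |y i (π i) (σ i)|
  have hn2 : (0 : ℝ) < (n : ℝ) ^ 2 := by positivity
  have hf2 : (0 : ℝ) < (n ! : ℝ) ^ 2 := by positivity
  constructor
  · calc (8 : ℝ)⁻¹ * (1 / (n : ℝ) ^ 2 * S) = S / (8 * n ^ 2) := by ring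
      _ ≤ T / (n ! : ℝ) ^ 2 := by rw [div_le_div_iff₀ (by positivity) hf2]; linarith
      _ = 1 / (n ! : ℝ) ^ 2 * T := by ring
  · calc 1 / (n ! : ℝ) ^ 2 * T = T / (n ! : ℝ) ^ 2 := by ring
      _ ≤ 8 * S / n ^ 2 := by rw [div_le_div_iff₀ hf2 hn2]; nlinarith [mul_nonneg hf2.le hS]
      _ = 8 * (1 / (n : ℝ) ^ 2 * S) := by ring
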